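/- arXiv:1902.00923 — 3 statements merged into one kernel-verified Lean document; each statement's English description precedes it below -/
import Mathlib

section
/- Suppose Θ_{k+1} = Θ_k + ε(A_k Θ_k + b_k) with ‖A_k‖ ≤ 1, ‖b_k‖ ≤ b_max, ε > 0 and ετ ≤ 1/4 for an integer τ ≥ 1. Then ‖Θ_τ - Θ_0‖ ≤ 4ετ‖Θ_τ‖ + 4ετ b_max. -/
/-- Reinterpret a plain vector as an element of Euclidean space (2-norm). -/
def toE {d : ℕ} (v : Fin d → ℝ) : EuclideanSpace ℝ (Fin d) := WithLp.toLp 2 v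

/- Each step moves the iterate by at most `ε (‖Θ_k‖ + b_max)`; as long as `ε k ≤ 1/2` the
iterates stay within `‖Θ_0‖ + 2εk(‖Θ_0‖ + b_max)`, which gives the linear drift bound
`‖Θ_τ - Θ_0‖ ≤ 2ετ(‖Θ_0‖ + b_max)`. Replacing `‖Θ_0‖` by `‖Θ_τ‖ + ‖Θ_τ - Θ_0‖` and absorbing
the drift into the left side costs a further factor `1 / (1 - 2ετ) ≤ 2`. -/

section Drift

variable {E : Type*} [SeminormedAddCommGroup E]

theorem norm_sub_zero_le_of_norm_succ_sub_le {x : ℕ → E} {ε β : ℝ} (hε : 0 ≤ ε) (hβ : 0 ≤ β) :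
    ∀ n : ℕ, ε * n ≤ 1 / 2 → (∀ k < n, ‖x (k + 1) - x k‖ ≤ ε * (‖x k‖ + β)) →
      ‖x n - x 0‖ ≤ 2 * ε * n * (‖x 0‖ + β)
  | 0, _, _ => by simp
  | n + 1, hn, hx => by
    push_cast at hn ⊢
    have hM : 0 ≤ ‖x 0‖ + β := by positivity
    have ih : ‖x n - x 0‖ ≤ 2 * ε * n * (‖x 0‖ + β) :=
      norm_sub_zero_le_of_norm_succ_sub_le hε hβ n (by linarith)
        fun k hk => hx k (Nat.lt_succ_of_lt hk)
    have hstep : ‖x (n + 1) - x n‖ ≤ ε * (‖x 0‖ + 2 * ε * n * (‖x 0‖ + β) + β) := by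
      refine (hx n n.lt_succ_self).trans (mul_le_mul_of_nonneg_left ?_ hε)
      linarith [norm_le_norm_add_norm_sub' (x n) (x 0)]
    calc ‖x (n + 1) - x 0‖ ≤ ‖x (n + 1) - x n‖ + ‖x n - x 0‖ :=
          norm_sub_le_norm_sub_add_norm_sub _ _ _
      _ ≤ ε * (‖x 0‖ + 2 * ε * n * (‖x 0‖ + β) + β) + 2 * ε * n * (‖x 0‖ + β) :=
          add_le_add hstep ih
      _ ≤ 2 * ε * (n + 1) * (‖x 0‖ + β) := by
          nlinarith [mul_le_mul_of_nonneg_right hn (mul_nonneg hε hM)]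

theorem norm_sub_le_two_mul_of_norm_sub_le {u v : E} {s β : ℝ} (hs₀ : 0 ≤ s) (hs : s ≤ 1 / 2)
    (h : ‖u - v‖ ≤ s * (‖v‖ + β)) : ‖u - v‖ ≤ 2 * s * (‖u‖ + β) := by
  have hv : ‖v‖ ≤ ‖u‖ + ‖u - v‖ := norm_le_norm_add_norm_sub _ _
  nlinarith [mul_le_mul_of_nonneg_left hv hs₀, norm_nonneg (u - v)]

end Drift

theorem norm_succ_sub_le_of_linear_recursion {d : ℕ} {Θ b : ℕ → EuclideanSpace ℝ (Fin d)}
    {A : ℕ → Matrix (Fin d) (Fin d) ℝ} {ε bmax : ℝ} (hε : 0 ≤ ε)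
    (hA : ∀ k (x : EuclideanSpace ℝ (Fin d)), ‖toE ((A k).mulVec x)‖ ≤ ‖x‖)
    (hb : ∀ k, ‖b k‖ ≤ bmax)
    (hrec : ∀ k, Θ (k + 1) = Θ k + ε • (toE ((A k).mulVec (Θ k)) + b k)) (k : ℕ) :
    ‖Θ (k + 1) - Θ k‖ ≤ ε * (‖Θ k‖ + bmax) := by
  rw [hrec k, add_sub_cancel_left, norm_smul, Real.norm_of_nonneg hε]
  exact mul_le_mul_of_nonneg_left ((norm_add_le _ _).trans (add_le_add (hA k _) (hb k))) hε

theorem stmt_7_general (d : ℕ) (Θ b : ℕ → EuclideanSpace ℝ (Fin d))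
    (A : ℕ → Matrix (Fin d) (Fin d) ℝ) (ε bmax : ℝ) (τ : ℕ) (hε : 0 < ε) (hbmax : 0 ≤ bmax)
    (hετ : ε * τ ≤ 1 / 4)
    (hA : ∀ k (x : EuclideanSpace ℝ (Fin d)), ‖toE ((A k).mulVec x)‖ ≤ ‖x‖)
    (hb : ∀ k, ‖b k‖ ≤ bmax)
    (hrec : ∀ k, Θ (k + 1) = Θ k + ε • (toE ((A k).mulVec (Θ k)) + b k)) :
    ‖Θ τ - Θ 0‖ ≤ 4 * ε * τ * ‖Θ τ‖ + 4 * ε * τ * bmax := by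
  have hdrift : ‖Θ τ - Θ 0‖ ≤ 2 * ε * τ * (‖Θ 0‖ + bmax) :=
    norm_sub_zero_le_of_norm_succ_sub_le hε.le hbmax τ (by linarith) fun k _ =>
      norm_succ_sub_le_of_linear_recursion hε.le hA hb hrec k
  have := norm_sub_le_two_mul_of_norm_sub_le (s := 2 * ε * τ) (by positivity) (by linarith) hdrift
  linarith

theorem stmt_7 (d : ℕ) (Θ b : ℕ → EuclideanSpace ℝ (Fin d))
    (A : ℕ → Matrix (Fin d) (Fin d) ℝ) (ε bmax : ℝ) (τ : ℕ) (hε : 0 < ε) (hbmax : 0 ≤ bmax)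
    (hτ : 1 ≤ τ) (hετ : ε * τ ≤ 1 / 4)
    (hA : ∀ k (x : EuclideanSpace ℝ (Fin d)), ‖toE ((A k).mulVec x)‖ ≤ ‖x‖)
    (hb : ∀ k, ‖b k‖ ≤ bmax)
    (hrec : ∀ k, Θ (k + 1) = Θ k + ε • (toE ((A k).mulVec (Θ k)) + b k)) :
    ‖Θ τ - Θ 0‖ ≤ 4 * ε * τ * ‖Θ τ‖ + 4 * ε * τ * bmax :=
  stmt_7_general d Θ b A ε bmax τ hε hbmax hετ hA hb hrec
end

section
/- Suppose Θ_{k+1} = Θ_k + ε(A_k Θ_k + b_k) with ‖A_k‖ ≤ 1, ‖b_k‖ ≤ b_max, ε > 0 and ετ ≤ 1/4 for an integer τ ≥ 1. Then ‖Θ_τ - Θ_0‖² ≤ 32 ε²τ²‖Θ_τ‖² + 32 ε²τ² b_max². -/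
section StepBound

variable {E : Type*} [SeminormedAddCommGroup E] {x : ℕ → E} {c β : ℝ} {n : ℕ}

theorem norm_sub_zero_le_mul_norm_zero_add (hc : 0 ≤ c) (hβ : 0 ≤ β)
    (hstep : ∀ k, ‖x (k + 1) - x k‖ ≤ c * (‖x k‖ + β)) (hcn : c * n ≤ 1 / 2) :
    ∀ k ≤ n, ‖x k - x 0‖ ≤ 2 * c * k * (‖x 0‖ + β) := by
  intro k hk
  induction k with
  | zero => simp
  | succ k ih =>
    have hdist := ih (Nat.le_of_succ_le hk)
    have hxk : ‖x k‖ ≤ ‖x 0‖ + ‖x k - x 0‖ := norm_le_norm_add_norm_sub' (x k) (x 0)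
    have hck : 2 * c * k ≤ 1 := by
      have : (k : ℝ) ≤ n := by exact_mod_cast Nat.le_of_succ_le hk
      nlinarith
    have hM : 0 ≤ ‖x 0‖ + β := by positivity
    calc ‖x (k + 1) - x 0‖ ≤ ‖x (k + 1) - x k‖ + ‖x k - x 0‖ :=
          norm_sub_le_norm_sub_add_norm_sub _ _ _
      _ ≤ c * (‖x k‖ + β) + 2 * c * k * (‖x 0‖ + β) := add_le_add (hstep k) hdist
      _ ≤ c * ((‖x 0‖ + β) + 2 * c * k * (‖x 0‖ + β)) + 2 * c * k * (‖x 0‖ + β) := by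
        have : ‖x k‖ + β ≤ (‖x 0‖ + β) + 2 * c * k * (‖x 0‖ + β) := by linarith
        gcongr
      _ ≤ 2 * c * ↑(k + 1) * (‖x 0‖ + β) := by
        push_cast
        nlinarith [mul_le_mul_of_nonneg_left hck (mul_nonneg hc hM)]

theorem norm_sub_zero_le_mul_norm_add (hc : 0 ≤ c) (hβ : 0 ≤ β)
    (hstep : ∀ k, ‖x (k + 1) - x k‖ ≤ c * (‖x k‖ + β)) (hcn : c * n ≤ 1 / 4) :
    ‖x n - x 0‖ ≤ 4 * c * n * (‖x n‖ + β) := by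
  have hdist := norm_sub_zero_le_mul_norm_zero_add hc hβ hstep (by linarith) n le_rfl
  have hx0 : ‖x 0‖ ≤ ‖x n‖ + ‖x n - x 0‖ := norm_le_norm_add_norm_sub (x n) (x 0)
  have hcn0 : 0 ≤ 2 * c * n := by positivity
  nlinarith [mul_le_mul_of_nonneg_left hx0 hcn0, norm_nonneg (x n - x 0)]

end StepBound

theorem stmt_8_general (d : ℕ) (Θ b : ℕ → EuclideanSpace ℝ (Fin d))
    (A : ℕ → Matrix (Fin d) (Fin d) ℝ) (ε bmax : ℝ) (τ : ℕ) (hε : 0 < ε) (hbmax : 0 ≤ bmax)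
    (hετ : ε * τ ≤ 1 / 4)
    (hA : ∀ k (x : EuclideanSpace ℝ (Fin d)), ‖toE ((A k).mulVec x)‖ ≤ ‖x‖)
    (hb : ∀ k, ‖b k‖ ≤ bmax)
    (hrec : ∀ k, Θ (k + 1) = Θ k + ε • (toE ((A k).mulVec (Θ k)) + b k)) :
    ‖Θ τ - Θ 0‖ ^ 2 ≤ 32 * ε ^ 2 * τ ^ 2 * ‖Θ τ‖ ^ 2 + 32 * ε ^ 2 * τ ^ 2 * bmax ^ 2 := by
  have hstep : ∀ k, ‖Θ (k + 1) - Θ k‖ ≤ ε * (‖Θ k‖ + bmax) := fun k => by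
    rw [hrec k, add_sub_cancel_left, norm_smul, Real.norm_of_nonneg hε.le]
    gcongr
    exact (norm_add_le _ _).trans (add_le_add (hA k (Θ k)) (hb k))
  have hdist := norm_sub_zero_le_mul_norm_add hε.le hbmax hstep hετ
  calc ‖Θ τ - Θ 0‖ ^ 2 ≤ (4 * ε * τ * ‖Θ τ‖ + 4 * ε * τ * bmax) ^ 2 := by
        gcongr
        linarith
    _ ≤ 2 * ((4 * ε * τ * ‖Θ τ‖) ^ 2 + (4 * ε * τ * bmax) ^ 2) := add_sq_le
    _ = 32 * ε ^ 2 * τ ^ 2 * ‖Θ τ‖ ^ 2 + 32 * ε ^ 2 * τ ^ 2 * bmax ^ 2 := by ring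

theorem stmt_8 (d : ℕ) (Θ b : ℕ → EuclideanSpace ℝ (Fin d))
    (A : ℕ → Matrix (Fin d) (Fin d) ℝ) (ε bmax : ℝ) (τ : ℕ) (hε : 0 < ε) (hbmax : 0 ≤ bmax)
    (hτ : 1 ≤ τ) (hετ : ε * τ ≤ 1 / 4)
    (hA : ∀ k (x : EuclideanSpace ℝ (Fin d)), ‖toE ((A k).mulVec x)‖ ≤ ‖x‖)
    (hb : ∀ k, ‖b k‖ ≤ bmax)
    (hrec : ∀ k, Θ (k + 1) = Θ k + ε • (toE ((A k).mulVec (Θ k)) + b k)) :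
    ‖Θ τ - Θ 0‖ ^ 2 ≤ 32 * ε ^ 2 * τ ^ 2 * ‖Θ τ‖ ^ 2 + 32 * ε ^ 2 * τ ^ 2 * bmax ^ 2 :=
  stmt_8_general d Θ b A ε bmax τ hε hbmax hετ hA hb hrec
end

section
/- Consider the scalar recursion Θ_{k+1} = Θ_k + ε(A(X_k)Θ_k + b(X_k)), where (X_k) are i.i.d. uniform on {-1, 1}, A(-1) = -2, b(-1) = -1, A(1) = b(1) = 1, and ε > 0. If Θ_0 has a stationary distribution (i.e., Θ_1 has the same law as Θ_0) with E[Θ_0²] > 0 and E[Θ_0^{2n}] < ∞ for an integer n with ε(n-1) > 2, then one obtains the contradiction 0 = E[Θ_1^{2n} - Θ_0^{2n}] ≥ (ε(n-1) - 2) ε n E[Θ_0²] > 0; hence the stationary 2n-th moment does not exist when ε(n-1) > 2. -/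
/-! Put `Y = Θ + 1`. On the event `X = 1`, which has probability `1/2` and is independent of
`Θ₀`, the recursion reads `Y₁ = (1 + ε) Y₀`, so stationarity gives
`E[Y₀^{2n}] ≥ (1 + ε)^{2n} E[Y₀^{2n}] / 2`. As `(1 + ε)^{2n} ≥ 1 + 2nε > 2`, this forces
`Θ₀ = -1` almost surely, hence also `Θ₁ = -1` almost surely. But on the event `X = -1`,
of positive probability, the recursion then gives `Θ₁ = ε - 1`. -/

open MeasureTheory ProbabilityTheory

lemma two_lt_one_add_pow {ε : ℝ} {m : ℕ} (h : 1 < m * ε) : 2 < (1 + ε) ^ m := by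
  have hε : 0 < ε := pos_of_mul_pos_right (by linarith) m.cast_nonneg
  linarith [one_add_mul_le_pow (by linarith : (-2 : ℝ) ≤ ε) m]

section

variable {Ω α β : Type*} [MeasurableSpace Ω] [MeasurableSpace α] [MeasurableSpace β]
  {μ : Measure Ω}

lemma integrable_pow_iff_memLp_of_even {f : Ω → ℝ} {p : ℕ} (hp : Even p) (hp0 : p ≠ 0)
    (hf : AEStronglyMeasurable f μ) : Integrable (fun ω => f ω ^ p) μ ↔ MemLp f p μ := by
  rw [← integrable_norm_rpow_iff hf (by exact_mod_cast hp0) (by simp)]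
  simp [Real.norm_eq_abs, hp.pow_abs]

lemma MeasureTheory.Integrable.add_const_pow_of_even [IsFiniteMeasure μ] {f : Ω → ℝ} {p : ℕ} (hp : Even p)
    (hf : AEStronglyMeasurable f μ) (hint : Integrable (fun ω => f ω ^ p) μ) (c : ℝ) :
    Integrable (fun ω => (f ω + c) ^ p) μ := by
  rcases eq_or_ne p 0 with rfl | hp0
  · simp
  refine (integrable_pow_iff_memLp_of_even (f := fun ω => f ω + c) hp hp0
    (hf.add aestronglyMeasurable_const)).2 ?_
  exact ((integrable_pow_iff_memLp_of_even hp hp0 hf).1 hint).add (memLp_const c)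

lemma ProbabilityTheory.IndepFun.setIntegral_preimage_eq_mul {X : Ω → α} {Y : Ω → β}
    {g : β → ℝ} {S : Set α} (hXY : IndepFun X Y μ) (hX : Measurable X) (hY : Measurable Y)
    (hg : Measurable g) (hS : MeasurableSet S) :
    ∫ ω in X ⁻¹' S, g (Y ω) ∂μ = μ.real (X ⁻¹' S) * ∫ ω, g (Y ω) ∂μ := by
  have hind : IndepFun (S.indicator (1 : α → ℝ) ∘ X) (g ∘ Y) μ :=
    hXY.comp (measurable_one.indicator hS) hg
  have hprod : (X ⁻¹' S).indicator (fun ω => g (Y ω)) =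
      fun ω => (S.indicator 1 ∘ X) ω * (g ∘ Y) ω := by
    ext ω
    by_cases h : X ω ∈ S <;> simp [h]
  have hone : (X ⁻¹' S).indicator (1 : Ω → ℝ) = S.indicator 1 ∘ X := by
    ext ω
    by_cases h : X ω ∈ S <;> simp [h]
  rw [← integral_indicator (hX hS), ← integral_indicator_one (hX hS), hprod, hone]
  exact hind.integral_fun_mul_eq_mul_integral
    ((measurable_one.indicator hS).comp hX).aestronglyMeasurable
    (hg.comp hY).aestronglyMeasurable

theorem ProbabilityTheory.IdentDistrib.ae_eq_zero_of_eq_mul_on_indep {Y₀ Y₁ : Ω → ℝ}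
    {X : Ω → α} {S : Set α} {c : ℝ} {p : ℕ} (hid : IdentDistrib Y₁ Y₀ μ μ)
    (hindep : IndepFun X Y₀ μ) (hX : Measurable X) (hY₀ : Measurable Y₀) (hS : MeasurableSet S)
    (hp : Even p) (hint : Integrable (fun ω => Y₀ ω ^ p) μ)
    (hmul : ∀ ω, X ω ∈ S → Y₁ ω = c * Y₀ ω) (hgrowth : 1 < μ.real (X ⁻¹' S) * c ^ p) :
    Y₀ =ᵐ[μ] 0 := by
  have hpow : Measurable fun y : ℝ => y ^ p := measurable_id.pow_const p
  set M := ∫ ω, Y₀ ω ^ p ∂μ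
  have hM0 : 0 ≤ M := integral_nonneg fun ω => hp.pow_nonneg _
  have hgrow : μ.real (X ⁻¹' S) * c ^ p * M ≤ M := calc
    μ.real (X ⁻¹' S) * c ^ p * M = c ^ p * ∫ ω in X ⁻¹' S, Y₀ ω ^ p ∂μ := by
      rw [hindep.setIntegral_preimage_eq_mul hX hY₀ hpow hS]
      ring
    _ = ∫ ω in X ⁻¹' S, Y₁ ω ^ p ∂μ := by
      rw [← integral_const_mul]
      refine setIntegral_congr_fun (hX hS) fun ω hω => ?_
      rw [hmul ω hω, mul_pow]
    _ ≤ ∫ ω, Y₁ ω ^ p ∂μ :=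
      setIntegral_le_integral ((hid.comp hpow).integrable_iff.2 hint)
        (ae_of_all _ fun ω => hp.pow_nonneg _)
    _ = M := (hid.comp hpow).integral_eq
  have hM : M = 0 := by nlinarith
  filter_upwards [(integral_eq_zero_iff_of_nonneg (fun ω => hp.pow_nonneg _) hint).1 hM]
    with ω hω using eq_zero_of_pow_eq_zero hω

end

theorem stmt_16_general (Ω : Type*) [MeasurableSpace Ω] (μ : Measure Ω) [IsProbabilityMeasure μ]
    (Θ0 Θ1 X : Ω → ℝ) (hΘ0 : Measurable Θ0) (hΘ1 : Measurable Θ1) (hX : Measurable X)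
    (ε : ℝ) (hε : 0 < ε) (n : ℕ) (hn : 2 < ε * ((n : ℝ) - 1))
    (A b : ℝ → ℝ)
    (hA : A (-1) = -2 ∧ A 1 = 1) (hb : b (-1) = -1 ∧ b 1 = 1)
    (hX1 : μ {ω | X ω = 1} = 1 / 2) (hXm1 : μ {ω | X ω = -1} = 1 / 2)
    (hindep : ProbabilityTheory.IndepFun X Θ0 μ)
    (hrec : ∀ ω, Θ1 ω = Θ0 ω + ε * (A (X ω) * Θ0 ω + b (X ω)))
    (hstat : Measure.map Θ1 μ = Measure.map Θ0 μ)
    (hmom : Integrable (fun ω => (Θ0 ω) ^ (2 * n)) μ) :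
    False := by
  have hid : IdentDistrib Θ1 Θ0 μ μ := ⟨hΘ1.aemeasurable, hΘ0.aemeasurable, hstat⟩
  have hhalf : μ.real (X ⁻¹' {1}) = 1 / 2 := by simp [measureReal_def, Set.preimage, hX1]
  have hgrowth : 2 < (1 + ε) ^ (2 * n) := two_lt_one_add_pow (by push_cast; nlinarith)
  have hshift : (fun ω => Θ0 ω + 1) =ᵐ[μ] 0 := by
    refine (hid.comp (measurable_add_const 1)).ae_eq_zero_of_eq_mul_on_indep (X := X)
      (hindep.comp measurable_id (measurable_add_const 1)) hX (hΘ0.add_const 1)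
      (measurableSet_singleton 1) (even_two_mul n)
      (hmom.add_const_pow_of_even (even_two_mul n) hΘ0.aestronglyMeasurable 1) (c := 1 + ε)
      (fun ω hω => ?_) (by rw [hhalf]; linarith)
    simp only [Function.comp_apply, Set.mem_singleton_iff] at hω ⊢
    rw [hrec, hω, hA.2, hb.2]
    ring
  have hΘ0_ae : ∀ᵐ ω ∂μ, Θ0 ω = -1 := hshift.mono fun ω h => eq_neg_of_add_eq_zero_left h
  have hΘ1_ae : ∀ᵐ ω ∂μ, Θ1 ω = -1 :=
    hid.symm.ae_mem_snd (measurableSet_singleton (-1)) hΘ0_ae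
  have hXm1_null : μ {ω | X ω = -1} = 0 := by
    rw [measure_eq_zero_iff_ae_notMem]
    filter_upwards [hΘ0_ae, hΘ1_ae] with ω h0 h1 hXω
    have h := hrec ω
    rw [hXω, hA.1, hb.1, h0, h1] at h
    linarith
  rw [hXm1_null] at hXm1
  exact (ENNReal.half_pos one_ne_zero).ne hXm1

theorem stmt_16 (Ω : Type*) [MeasurableSpace Ω] (μ : Measure Ω) [IsProbabilityMeasure μ]
    (Θ0 Θ1 X : Ω → ℝ) (hΘ0 : Measurable Θ0) (hΘ1 : Measurable Θ1) (hX : Measurable X)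
    (ε : ℝ) (hε : 0 < ε) (n : ℕ) (hn : 2 < ε * ((n : ℝ) - 1))
    (A b : ℝ → ℝ)
    (hA : A (-1) = -2 ∧ A 1 = 1) (hb : b (-1) = -1 ∧ b 1 = 1)
    (hXval : ∀ ω, X ω = 1 ∨ X ω = -1)
    (hX1 : μ {ω | X ω = 1} = 1 / 2) (hXm1 : μ {ω | X ω = -1} = 1 / 2)
    (hindep : ProbabilityTheory.IndepFun X Θ0 μ)
    (hrec : ∀ ω, Θ1 ω = Θ0 ω + ε * (A (X ω) * Θ0 ω + b (X ω)))
    (hstat : Measure.map Θ1 μ = Measure.map Θ0 μ)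
    (hmom : Integrable (fun ω => (Θ0 ω) ^ (2 * n)) μ)
    (hvar : 0 < ∫ ω, (Θ0 ω) ^ 2 ∂μ) :
    False :=
  stmt_16_general Ω μ Θ0 Θ1 X hΘ0 hΘ1 hX ε hε n hn A b hA hb hX1 hXm1 hindep hrec hstat hmom
end
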